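/- arXiv:1603.03838 — 2 statements merged into one kernel-verified Lean document; each statement's English description precedes it below -/
import Mathlib

section
/- Let 0 < r < R and let r', R' satisfy r²/R < r' < R' < R²/r. Then there exists a constant C > 0 such that for every k ∈ ℤ: ∫_{A(r',R')} |z|^{2k} dA(z) ≤ C · (∫_{A(r,R)} |z|^{2k} dA(z))² · ∫_{A(r,R)} |z|^{−2k} dA(z). -/
open MeasureTheory Complex Filter Topology

noncomputable section

/-- The open annulus `{z : r < |z| < R}` in `ℂ`. -/
def Annulus (r R : ℝ) : Set ℂ := {z : ℂ | r < ‖z‖ ∧ ‖z‖ < R}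

/-- A product of annuli in `ℂⁿ`. -/
def ProdAnnuli {n : ℕ} (r R : Fin n → ℝ) : Set (Fin n → ℂ) :=
  {z | ∀ k, z k ∈ Annulus (r k) (R k)}

/-- Membership in the Bergman space `A²(Ω)`: holomorphic and square integrable on `Ω`. -/
def MemA2 {E : Type*} [NormedAddCommGroup E] [NormedSpace ℂ E] [MeasureSpace E]
    (f : E → ℂ) (Ω : Set E) : Prop :=
  DifferentiableOn ℂ f Ω ∧ MemLp f 2 (volume.restrict Ω)

/-- `g` is the Bergman projection of `u ∈ L²(Ω)`: `g ∈ A²(Ω)` and `u - g ⟂ A²(Ω)`. -/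
def IsBergmanProj {E : Type*} [NormedAddCommGroup E] [NormedSpace ℂ E] [MeasureSpace E]
    (Ω : Set E) (u g : E → ℂ) : Prop :=
  MemA2 g Ω ∧
    ∀ h : E → ℂ, MemA2 h Ω → ∫ z in Ω, (u z - g z) * (starRingEnd ℂ) (h z) = 0

/-- `Ω` is invariant under independent rotations of the coordinates. -/
def IsReinhardt {n : ℕ} (Ω : Set (Fin n → ℂ)) : Prop :=
  ∀ z ∈ Ω, ∀ θ : Fin n → ℝ, (fun k => Complex.exp ((θ k : ℂ) * Complex.I) * z k) ∈ Ω

/-!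
For `r < s < R`, `|z|^n ≥ s^n` on one of the two halves `A(r,s)`, `A(s,R)` of `A(r,R)` (which
one depends on the sign of `n`), so `∫_{A(r,R)} |z|^n ≥ s^n m(s)` with `m(s) > 0` independent
of `n`. Choosing `s, t ∈ (r, R)` with `s² = ρ t` gives
`(∫_{A(r,R)} |z|^n)² ∫_{A(r,R)} |z|^{-n} ≥ s^{2n} t^{-n} m(s)² m(t) = ρ^n m(s)² m(t)`,
and such `s, t` exist exactly when `r²/R < ρ < R²/r`. Since `|z|^n ≤ max(r'^n, R'^n)` on
`A(r', R')`, applying this to `ρ = r'` and `ρ = R'` proves the theorem.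
-/

open Set

lemma zpow_le_zpow_left_of_nonpos₀ {a b : ℝ} {n : ℤ} (hn : n ≤ 0) (ha : 0 < a) (h : a ≤ b) :
    b ^ n ≤ a ^ n := by
  simpa only [inv_zpow', neg_neg] using
    zpow_le_zpow_left₀ (neg_nonneg.2 hn) (inv_pos.2 (ha.trans_le h)).le (inv_anti₀ ha h)

lemma zpow_le_max_of_mem_Icc {a b x : ℝ} (ha : 0 < a) (hx : x ∈ Icc a b) (n : ℤ) :
    x ^ n ≤ max (a ^ n) (b ^ n) := by
  rcases le_total 0 n with hn | hn
  · exact le_max_of_le_right (zpow_le_zpow_left₀ hn (ha.le.trans hx.1) hx.2)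
  · exact le_max_of_le_left (zpow_le_zpow_left_of_nonpos₀ hn ha hx.1)

lemma MeasureTheory.mul_measureReal_le_setIntegral_of_subset {X : Type*} [MeasurableSpace X]
    {μ : Measure X} {s t : Set X} {f : X → ℝ} {c : ℝ} (hs : MeasurableSet s)
    (hμs : μ s ≠ ⊤) (hst : s ⊆ t) (hf : IntegrableOn f t μ) (hf0 : 0 ≤ᵐ[μ.restrict t] f)
    (hc : ∀ x ∈ s, c ≤ f x) :
    c * μ.real s ≤ ∫ x in t, f x ∂μ :=
  (setIntegral_ge_of_const_le_real hs hμs hc (hf.mono_set hst)).trans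
    (setIntegral_mono_set hf hf0 hst.eventuallyLE)

namespace Annulus

lemma isOpen (a b : ℝ) : IsOpen (Annulus a b) :=
  isOpen_Ioo.preimage continuous_norm

lemma measurableSet (a b : ℝ) : MeasurableSet (Annulus a b) :=
  (isOpen a b).measurableSet

lemma subset_ball (a b : ℝ) : Annulus a b ⊆ Metric.ball 0 b :=
  fun _ hz => mem_ball_zero_iff.2 hz.2

lemma mono {a b r R : ℝ} (hr : r ≤ a) (hR : b ≤ R) : Annulus a b ⊆ Annulus r R :=
  fun _ hz => ⟨hr.trans_lt hz.1, hz.2.trans_le hR⟩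

lemma volume_ne_top (a b : ℝ) : volume (Annulus a b) ≠ ⊤ :=
  measure_ne_top_of_subset (subset_ball a b) measure_ball_lt_top.ne

lemma measureReal_pos {a b : ℝ} (ha : 0 ≤ a) (hab : a < b) : 0 < volume.real (Annulus a b) := by
  refine ENNReal.toReal_pos ((isOpen a b).measure_pos volume ⟨((a + b) / 2 : ℝ), ?_⟩).ne'
    (volume_ne_top a b)
  constructor <;> rw [Complex.norm_real, Real.norm_of_nonneg (by linarith)] <;> linarith

lemma norm_zpow_le_max {a b : ℝ} (ha : 0 < a) (n : ℤ) {z : ℂ} (hz : z ∈ Annulus a b) :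
    ‖z‖ ^ n ≤ max (a ^ n) (b ^ n) :=
  zpow_le_max_of_mem_Icc ha ⟨hz.1.le, hz.2.le⟩ n

lemma integrableOn_norm_zpow {a : ℝ} (b : ℝ) (ha : 0 < a) (n : ℤ) :
    IntegrableOn (fun z : ℂ => ‖z‖ ^ n) (Annulus a b) := by
  refine Measure.integrableOn_of_bounded (volume_ne_top a b)
    (by fun_prop : Measurable fun z : ℂ => ‖z‖ ^ n).aestronglyMeasurable
    (M := max (a ^ n) (b ^ n))
    ((ae_restrict_iff' (measurableSet a b)).2 (ae_of_all _ fun z hz => ?_))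
  rw [Real.norm_of_nonneg (by positivity)]
  exact norm_zpow_le_max ha n hz

lemma setIntegral_norm_zpow_le {a : ℝ} (b : ℝ) (ha : 0 < a) (n : ℤ) :
    ∫ z in Annulus a b, ‖z‖ ^ n ≤ max (a ^ n) (b ^ n) * volume.real (Annulus a b) := by
  refine (le_abs_self _).trans ?_
  rw [← Real.norm_eq_abs]
  refine norm_setIntegral_le_of_norm_le_const (volume_ne_top a b).lt_top fun z hz => ?_
  rw [Real.norm_of_nonneg (by positivity)]
  exact norm_zpow_le_max ha n hz

lemma zpow_mul_le_setIntegral_norm_zpow {r s R : ℝ} (hr : 0 < r) (hs : s ∈ Ioo r R) (n : ℤ) :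
    s ^ n * min (volume.real (Annulus r s)) (volume.real (Annulus s R)) ≤
      ∫ z in Annulus r R, ‖z‖ ^ n := by
  have hs0 : 0 < s := hr.trans hs.1
  have key {a b : ℝ} (hab : Annulus a b ⊆ Annulus r R)
      (hle : ∀ z ∈ Annulus a b, s ^ n ≤ ‖z‖ ^ n) :
      s ^ n * volume.real (Annulus a b) ≤ ∫ z in Annulus r R, ‖z‖ ^ n :=
    mul_measureReal_le_setIntegral_of_subset (measurableSet a b) (volume_ne_top a b) hab
      (integrableOn_norm_zpow R hr n) (ae_of_all _ fun z => by positivity) hle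
  rcases le_total 0 n with hn | hn
  · refine le_trans (by gcongr; exact min_le_right _ _) (key (mono hs.1.le le_rfl) fun z hz => ?_)
    exact zpow_le_zpow_left₀ hn hs0.le hz.1.le
  · refine le_trans (by gcongr; exact min_le_left _ _) (key (mono le_rfl hs.2.le) fun z hz => ?_)
    exact zpow_le_zpow_left_of_nonpos₀ hn (hr.trans hz.1) hz.2.le

end Annulus

lemma exists_sq_eq_mul_of_mem_Ioo {r R ρ : ℝ} (hr : 0 < r) (hrR : r < R)
    (hρ : ρ ∈ Ioo (r ^ 2 / R) (R ^ 2 / r)) :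
    ∃ s ∈ Ioo r R, ∃ t ∈ Ioo r R, s ^ 2 = ρ * t := by
  have hR : 0 < R := hr.trans hrR
  have hρ0 : 0 < ρ := (by positivity : 0 < r ^ 2 / R).trans hρ.1
  have hρr : ρ * r < R ^ 2 := (lt_div_iff₀ hr).1 hρ.2
  have hρR : r ^ 2 < ρ * R := by have := (div_lt_iff₀ hR).1 hρ.1; linarith
  obtain ⟨t, ht₁, ht₂⟩ : ∃ t, max r (r ^ 2 / ρ) < t ∧ t < min R (R ^ 2 / ρ) := by
    refine exists_between (max_lt (lt_min hrR ?_) (lt_min ?_ ?_))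
    · rwa [lt_div_iff₀ hρ0, mul_comm]
    · rwa [div_lt_iff₀ hρ0, mul_comm]
    · gcongr
  rw [max_lt_iff, div_lt_iff₀ hρ0] at ht₁
  rw [lt_min_iff, lt_div_iff₀ hρ0] at ht₂
  have hρt : 0 ≤ ρ * t := mul_nonneg hρ0.le (hr.trans ht₁.1).le
  refine ⟨√(ρ * t), ⟨?_, ?_⟩, t, ⟨ht₁.1, ht₂.1⟩, Real.sq_sqrt hρt⟩
  · exact Real.lt_sqrt_of_sq_lt (by linarith)
  · exact (Real.sqrt_lt' hR).2 (by linarith)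

lemma exists_zpow_le_mul_setIntegral_annulus {r R ρ : ℝ} (hr : 0 < r) (hrR : r < R)
    (hρ : ρ ∈ Ioo (r ^ 2 / R) (R ^ 2 / r)) :
    ∃ C : ℝ, 0 < C ∧ ∀ n : ℤ, ρ ^ n ≤
      C * (∫ z in Annulus r R, ‖z‖ ^ n) ^ 2 * ∫ z in Annulus r R, ‖z‖ ^ (-n) := by
  obtain ⟨s, hs, t, ht, hst⟩ := exists_sq_eq_mul_of_mem_Ioo hr hrR hρ
  set m : ℝ → ℝ := fun x => min (volume.real (Annulus r x)) (volume.real (Annulus x R))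
  have hm {x : ℝ} (hx : x ∈ Ioo r R) : 0 < m x :=
    lt_min (Annulus.measureReal_pos hr.le hx.1) (Annulus.measureReal_pos (hr.trans hx.1).le hx.2)
  have hs0 : 0 < s := hr.trans hs.1
  have ht0 : 0 < t := hr.trans ht.1
  have hms := hm hs
  have hmt := hm ht
  refine ⟨(m s ^ 2 * m t)⁻¹, by positivity, fun n => ?_⟩
  have hρn : ρ ^ n = (s ^ n) ^ 2 * t ^ (-n) := by
    rw [← zpow_natCast (s ^ n), ← zpow_mul, mul_comm n, zpow_mul, zpow_natCast, hst, mul_zpow,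
      zpow_neg, mul_inv_cancel_right₀ (zpow_ne_zero n ht0.ne')]
  calc ρ ^ n = (m s ^ 2 * m t)⁻¹ * (s ^ n * m s) ^ 2 * (t ^ (-n) * m t) := by
        rw [hρn]; field_simp
    _ ≤ _ := by
        gcongr
        · exact Annulus.zpow_mul_le_setIntegral_norm_zpow hr hs n
        · exact Annulus.zpow_mul_le_setIntegral_norm_zpow hr ht (-n)

/-- For `0 < r < R` and `r²/R < r' < R' < R²/r`, there is a constant
`C > 0` such that for every `k ∈ ℤ`,
`∫_{A(r',R')} |z|^{2k} dA ≤ C (∫_{A(r,R)} |z|^{2k} dA)² ∫_{A(r,R)} |z|^{-2k} dA`. -/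
theorem annulus_norm_comparison (r R r' R' : ℝ) (hr0 : 0 < r) (hrR : r < R)
    (h1 : r ^ 2 / R < r') (h2 : r' < R') (h3 : R' < R ^ 2 / r) :
    ∃ C : ℝ, 0 < C ∧ ∀ k : ℤ,
      (∫ z in Annulus r' R', ‖z‖ ^ (2 * k)) ≤
        C * (∫ z in Annulus r R, ‖z‖ ^ (2 * k)) ^ 2 *
          ∫ z in Annulus r R, ‖z‖ ^ (-(2 * k)) := by
  have hr'0 : 0 < r' := (div_pos (pow_pos hr0 2) (hr0.trans hrR)).trans h1
  obtain ⟨C₁, hC₁, h₁⟩ :=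
    exists_zpow_le_mul_setIntegral_annulus hr0 hrR ⟨h1, h2.trans h3⟩
  obtain ⟨C₂, hC₂, h₂⟩ :=
    exists_zpow_le_mul_setIntegral_annulus hr0 hrR ⟨h1.trans h2, h3⟩
  set V := volume.real (Annulus r' R')
  have hV : 0 < V := Annulus.measureReal_pos hr'0.le h2
  refine ⟨max C₁ C₂ * V, by positivity, fun k => ?_⟩
  set I := ∫ z in Annulus r R, ‖z‖ ^ (2 * k)
  set J := ∫ z in Annulus r R, ‖z‖ ^ (-(2 * k))
  have hIJ : 0 ≤ I ^ 2 * J := mul_nonneg (sq_nonneg _)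
    (setIntegral_nonneg (Annulus.measurableSet r R) fun z _ => by positivity)
  calc ∫ z in Annulus r' R', ‖z‖ ^ (2 * k)
      ≤ max (r' ^ (2 * k)) (R' ^ (2 * k)) * V := Annulus.setIntegral_norm_zpow_le R' hr'0 _
    _ ≤ max (C₁ * (I ^ 2 * J)) (C₂ * (I ^ 2 * J)) * V := by
        gcongr
        · simpa only [mul_assoc] using h₁ (2 * k)
        · simpa only [mul_assoc] using h₂ (2 * k)
    _ = max C₁ C₂ * V * I ^ 2 * J := by rw [← max_mul_of_nonneg _ _ hIJ]; ring
end
end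

section
/- Let Ω ⊂ ℂⁿ be a bounded Reinhardt domain with C¹ boundary whose closure does not intersect any coordinate hyperplane. Then for every boundary point A = (a₁,…,aₙ) ∈ bΩ there exist radii 0 < r_k < R_k (k = 1,…,n) such that the product of annuli P = ∏_{k=1}^n A(r_k,R_k) satisfies P ⊂ Ω and A ∈ ∏_{k=1}^n A(r_k²/R_k, R_k²/r_k). -/
open MeasureTheory Complex Filter Topology

noncomputable section

/-- `Ω` has `C¹` boundary: near each boundary point it is the sublevel set of a `C¹`
defining function with nonvanishing derivative on the boundary. -/
def HasC1Boundary {n : ℕ} (Ω : Set (Fin n → ℂ)) : Prop :=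
  ∀ p ∈ frontier Ω, ∃ (U : Set (Fin n → ℂ)) (ρ : (Fin n → ℂ) → ℝ),
    IsOpen U ∧ p ∈ U ∧ ContDiffOn ℝ 1 ρ U ∧
    (∀ x ∈ U, x ∈ Ω ↔ ρ x < 0) ∧
    ∀ x ∈ U ∩ frontier Ω, fderivWithin ℝ ρ U x ≠ 0

/-!
Near a boundary point `A`, the defining function `ρ` is differentiable with nonzero
derivative, so stepping from `A` a distance `2δ` against the gradient lands at a point `w`
whose `δ`-ball lies in `Ω`, for every small `δ`. By the Reinhardt property the whole
product of annuli `∏ A(|w_k| - δ, |w_k| + δ)` then lies in `Ω`: rotating each coordinate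
of a point of it brings it into that ball. Finally `| |A_k| - |w_k| | ≤ 2δ`, while the
enlarged annuli have half-widths about `3δ`, so they contain `A`.
-/

open Metric

lemma Complex.exp_arg_sub_mul_norm_mul_exp_arg (z w : ℂ) :
    exp (((z.arg - w.arg : ℝ) : ℂ) * I) * (‖z‖ * exp (w.arg * I)) = z := by
  push_cast
  rw [sub_mul, exp_sub, div_mul_eq_mul_div, mul_left_comm, mul_div_assoc,
    mul_div_cancel_right₀ _ (exp_ne_zero _), norm_mul_exp_arg_mul_I]

lemma IsReinhardt.prodAnnuli_subset {n : ℕ} {Ω : Set (Fin n → ℂ)} (hΩ : IsReinhardt Ω)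
    {w : Fin n → ℂ} {δ : ℝ} (hδ : 0 < δ) (hball : ball w δ ⊆ Ω) :
    ProdAnnuli (fun k => ‖w k‖ - δ) (fun k => ‖w k‖ + δ) ⊆ Ω := by
  intro z hz
  set ζ : Fin n → ℂ := fun k => ‖z k‖ * exp ((w k).arg * I)
  have hζ : ζ ∈ Ω := by
    refine hball ?_
    rw [mem_ball, dist_eq_norm, pi_norm_lt_iff hδ]
    intro k
    have hdiff : ζ k - w k = ((‖z k‖ - ‖w k‖ : ℝ) : ℂ) * exp ((w k).arg * I) := by
      conv_lhs => rw [← norm_mul_exp_arg_mul_I (w k)]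
      push_cast
      ring
    rw [Pi.sub_apply, hdiff, norm_mul, norm_exp_ofReal_mul_I, mul_one, norm_real,
      Real.norm_eq_abs, abs_sub_lt_iff]
    constructor <;> linarith [(hz k).1, (hz k).2]
  convert hΩ ζ hζ (fun k => (z k).arg - (w k).arg) using 1
  funext k
  exact (exp_arg_sub_mul_norm_mul_exp_arg (z k) (w k)).symm

lemma ContinuousLinearMap.exists_norm_lt_one_lt_apply {E : Type*} [NormedAddCommGroup E]
    [NormedSpace ℝ E] (L : E →L[ℝ] ℝ) {c : ℝ} (hc : c < ‖L‖) :
    ∃ u, ‖u‖ < 1 ∧ c < L u := by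
  obtain ⟨u, hu, hLu⟩ := L.exists_lt_apply_of_lt_opNorm hc
  rcases le_or_gt 0 (L u) with h | h
  · exact ⟨u, hu, by rwa [Real.norm_of_nonneg h] at hLu⟩
  · exact ⟨-u, by rwa [norm_neg], by rwa [Real.norm_of_nonpos h.le, ← map_neg] at hLu⟩

lemma HasFDerivAt.eventually_exists_ball_subset {E : Type*} [NormedAddCommGroup E]
    [NormedSpace ℝ E] {ρ : E → ℝ} {L : E →L[ℝ] ℝ} {A : E} {s : Set E}
    (hρ : HasFDerivAt ρ L A) (hL : L ≠ 0) (hρA : ρ A ≤ 0) (hs : s ∈ 𝓝 A) :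
    ∀ᶠ δ in 𝓝[>] (0 : ℝ), ∃ w, dist w A ≤ 2 * δ ∧ ball w δ ⊆ s ∩ {x | ρ x < 0} := by
  set K := ‖L‖
  have hK : 0 < K := norm_pos_iff.2 hL
  obtain ⟨u, hu, hLu⟩ := L.exists_norm_lt_one_lt_apply (by linarith : 9 / 10 * K < K)
  obtain ⟨η, hη, hnear⟩ := eventually_nhds_iff_ball.1
    (Filter.Eventually.and hs (hρ.isLittleO.def (by positivity : 0 < K / 10)))
  have hsmall : ∀ᶠ δ in 𝓝[>] (0 : ℝ), 0 < δ ∧ 3 * δ < η :=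
    eventually_mem_nhdsWithin.and <| nhdsWithin_le_nhds <|
      (continuous_const_mul (3 : ℝ)).continuousAt.eventually (gt_mem_nhds (by simpa using hη))
  filter_upwards [hsmall] with δ ⟨hδ, hδη⟩
  set w := A - (2 * δ) • u
  have hwA : dist w A ≤ 2 * δ := by
    rw [dist_eq_norm, sub_sub_cancel_left, norm_neg, norm_smul, Real.norm_of_nonneg (by positivity)]
    exact mul_le_of_le_one_right (by positivity) hu.le
  refine ⟨w, hwA, fun x hx => ?_⟩
  have hxw : ‖x - w‖ < δ := by rwa [← dist_eq_norm]
  have hxA : ‖x - A‖ < 3 * δ := by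
    rw [← dist_eq_norm]
    linarith [dist_triangle x w A, mem_ball.1 hx]
  obtain ⟨hxs, hρx⟩ := hnear x (by rw [mem_ball, dist_eq_norm]; linarith)
  have hLxA : L (x - A) = L (x - w) - 2 * δ * L u := by
    simp only [w, sub_sub_eq_add_sub, map_sub, map_add, map_smul, smul_eq_mul]
    ring
  have hLxw : L (x - w) ≤ K * δ :=
    (le_abs_self _).trans <| (L.le_opNorm _).trans (by gcongr)
  have hρx' : ρ x - ρ A - L (x - A) ≤ K / 10 * ‖x - A‖ := (le_abs_self _).trans hρx
  refine ⟨hxs, show ρ x < 0 from ?_⟩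
  linarith [mul_lt_mul_of_pos_left hxA (by positivity : 0 < K / 10),
    mul_lt_mul_of_pos_left hLu hδ, mul_pos hK hδ]

lemma HasC1Boundary.eventually_exists_ball_subset {n : ℕ} {Ω : Set (Fin n → ℂ)}
    (hC1 : HasC1Boundary Ω) {A : Fin n → ℂ} (hA : A ∈ frontier Ω) :
    ∀ᶠ δ in 𝓝[>] (0 : ℝ), ∃ w, dist w A ≤ 2 * δ ∧ ball w δ ⊆ Ω := by
  obtain ⟨U, ρ, hU, hAU, hρ, hiff, hgrad⟩ := hC1 A hA
  have hdiff : DifferentiableAt ℝ ρ A :=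
    (hρ.differentiableOn one_ne_zero).differentiableAt (hU.mem_nhds hAU)
  have hL : fderiv ℝ ρ A ≠ 0 := by
    rw [← fderivWithin_of_isOpen hU hAU]
    exact hgrad A ⟨hAU, hA⟩
  have hρA : ρ A ≤ 0 := by
    by_contra! hpos
    obtain ⟨x, hxΩ, hxρ, hxU⟩ :=
      ((mem_closure_iff_frequently.1 (frontier_subset_closure hA)).and_eventually
        ((hdiff.continuousAt.eventually (lt_mem_nhds hpos)).and (hU.mem_nhds hAU))).exists
    exact hxρ.not_gt ((hiff x hxU).1 hxΩ)
  filter_upwards [hdiff.hasFDerivAt.eventually_exists_ball_subset hL hρA (hU.mem_nhds hAU)]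
    with δ ⟨w, hwA, hball⟩
  exact ⟨w, hwA, fun x hx => (hiff x (hball hx).1).2 (hball hx).2⟩

lemma sq_div_lt_and_lt_sq_div {a s δ : ℝ} (hδ : 0 < δ) (hs : 3 * δ < s) (has : |a - s| ≤ 2 * δ) :
    (s - δ) ^ 2 / (s + δ) < a ∧ a < (s + δ) ^ 2 / (s - δ) := by
  obtain ⟨hlo, hhi⟩ := abs_le.1 has
  constructor
  · rw [div_lt_iff₀ (by linarith)]
    nlinarith
  · rw [lt_div_iff₀ (by linarith)]
    nlinarith

theorem boundary_point_in_enlarged_prodAnnuli_general {n : ℕ} (Ω : Set (Fin n → ℂ))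
    (hΩrein : IsReinhardt Ω)
    (hC1 : HasC1Boundary Ω)
    (haxes : ∀ z ∈ closure Ω, ∀ j : Fin n, z j ≠ 0)
    (A : Fin n → ℂ) (hA : A ∈ frontier Ω) :
    ∃ r R : Fin n → ℝ, (∀ k, 0 < r k ∧ r k < R k) ∧
      ProdAnnuli r R ⊆ Ω ∧
      A ∈ ProdAnnuli (fun k => (r k) ^ 2 / R k) (fun k => (R k) ^ 2 / r k) := by
  have hAk : ∀ k, ∀ᶠ δ in 𝓝[>] (0 : ℝ), 5 * δ < ‖A k‖ := fun k =>
    nhdsWithin_le_nhds <| (continuous_const_mul (5 : ℝ)).continuousAt.eventually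
      (gt_mem_nhds (by simpa using haxes A (frontier_subset_closure hA) k))
  obtain ⟨δ, ⟨w, hwA, hball⟩, hsmall, (hδ : 0 < δ)⟩ :=
    ((hC1.eventually_exists_ball_subset hA).and
      ((eventually_all.2 hAk).and eventually_mem_nhdsWithin)).exists
  have hcoord : ∀ k, |‖A k‖ - ‖w k‖| ≤ 2 * δ := fun k =>
    (abs_norm_sub_norm_le _ _).trans <|
      (norm_le_pi_norm (A - w) k).trans (by rwa [← dist_eq_norm, dist_comm])
  have hw : ∀ k, 3 * δ < ‖w k‖ := fun k => by
    linarith [(abs_le.1 (hcoord k)).2, hsmall k]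
  refine ⟨fun k => ‖w k‖ - δ, fun k => ‖w k‖ + δ, fun k => ⟨by linarith [hw k], by linarith⟩,
    hΩrein.prodAnnuli_subset hδ hball, fun k => sq_div_lt_and_lt_sq_div hδ (hw k) (hcoord k)⟩

/-- On a bounded Reinhardt domain `Ω` with `C¹` boundary whose closure
avoids the coordinate hyperplanes, every boundary point `A` admits a product of annuli
`P = ∏ A(r_k, R_k) ⊆ Ω` such that `A ∈ ∏ A(r_k²/R_k, R_k²/r_k)`. -/
theorem boundary_point_in_enlarged_prodAnnuli {n : ℕ} (Ω : Set (Fin n → ℂ))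
    (hΩopen : IsOpen Ω) (hΩconn : IsConnected Ω)
    (hΩbdd : Bornology.IsBounded Ω)
    (hΩrein : IsReinhardt Ω)
    (hC1 : HasC1Boundary Ω)
    (haxes : ∀ z ∈ closure Ω, ∀ j : Fin n, z j ≠ 0)
    (A : Fin n → ℂ) (hA : A ∈ frontier Ω) :
    ∃ r R : Fin n → ℝ, (∀ k, 0 < r k ∧ r k < R k) ∧
      ProdAnnuli r R ⊆ Ω ∧
      A ∈ ProdAnnuli (fun k => (r k) ^ 2 / R k) (fun k => (R k) ^ 2 / r k) :=
  boundary_point_in_enlarged_prodAnnuli_general Ω hΩrein hC1 haxes A hA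
end
end
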